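/- arXiv:1807.08538 — 2 statements merged into one kernel-verified Lean document; each statement's English description precedes it below -/
import Mathlib

section
/- Let ψ be a continuously differentiable L-periodic solution of the reduced-order equation D (ψ³ - ψ)' + v(ψ - c₀) + f₀ sin(kη) = 0 with D, v > 0, f₀ ≥ 0. Then every value of ψ lies in the interval [c₀ - f₀/v, c₀ + f₀/v]. -/
/-!
At a global extremum `a` of the periodic solution, `ψ' a = 0`, hence `(ψ³ - ψ)' a = 0` and the
equation reduces to `v (ψ a - c₀) = -f₀ sin (k a)`, so `|ψ a - c₀| ≤ f₀ / v`. Periodicity and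
continuity guarantee that the global maximum and minimum are attained, and every value of `ψ`
lies between them.
-/

open Set

namespace Function.Periodic

variable {α : Type*} [LinearOrder α] [TopologicalSpace α] {f : ℝ → α} {c : ℝ}

theorem exists_isMaxOn_univ [ClosedIciTopology α] (hp : Periodic f c) (hc : c ≠ 0)
    (hf : Continuous f) : ∃ a, IsMaxOn f univ a := by
  obtain ⟨_, ⟨a, rfl⟩, hmax⟩ :=
    (hp.compact_of_continuous hc hf).exists_isGreatest (range_nonempty f)
  exact ⟨a, fun x _ => hmax ⟨x, rfl⟩⟩

theorem exists_isMinOn_univ [ClosedIicTopology α] (hp : Periodic f c) (hc : c ≠ 0)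
    (hf : Continuous f) : ∃ a, IsMinOn f univ a := by
  obtain ⟨_, ⟨a, rfl⟩, hmin⟩ :=
    (hp.compact_of_continuous hc hf).exists_isLeast (range_nonempty f)
  exact ⟨a, fun x _ => hmin ⟨x, rfl⟩⟩

end Function.Periodic

theorem deriv_pow_three_sub_eq_zero {ψ : ℝ → ℝ} {a : ℝ} (hψ : DifferentiableAt ℝ ψ a)
    (ha : deriv ψ a = 0) : deriv (fun x => ψ x ^ 3 - ψ x) a = 0 := by
  have hderiv : HasDerivAt (fun x => ψ x ^ 3 - ψ x)
      ((3 : ℕ) * ψ a ^ 2 * deriv ψ a - deriv ψ a) a :=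
    (hψ.hasDerivAt.pow 3).sub hψ.hasDerivAt
  rw [hderiv.deriv, ha]
  ring

theorem mem_Icc_of_mul_sub_add_mul_sin_eq_zero {v f₀ c u θ : ℝ} (hv : 0 < v) (hf : 0 ≤ f₀)
    (h : v * (u - c) + f₀ * Real.sin θ = 0) : u ∈ Icc (c - f₀ / v) (c + f₀ / v) := by
  have hu : u = c - f₀ / v * Real.sin θ := by
    field_simp
    linarith
  have hfv : 0 ≤ f₀ / v := div_nonneg hf hv.le
  have hlow : f₀ / v * -1 ≤ f₀ / v * Real.sin θ :=
    mul_le_mul_of_nonneg_left (Real.neg_one_le_sin θ) hfv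
  have hhigh : f₀ / v * Real.sin θ ≤ f₀ / v :=
    mul_le_of_le_one_right hfv (Real.sin_le_one θ)
  constructor <;> linarith

theorem stmt2_general (D v f₀ L k c₀ : ℝ) (hv : 0 < v) (hf : 0 ≤ f₀) (hL : 0 < L)
    (ψ : ℝ → ℝ) (hC1 : ContDiff ℝ 1 ψ)
    (hper : ∀ η, ψ (η + L) = ψ η)
    (hode : ∀ η, D * deriv (fun x => ψ x ^ 3 - ψ x) η + v * (ψ η - c₀)
      + f₀ * Real.sin (k * η) = 0) :
    ∀ η, ψ η ∈ Set.Icc (c₀ - f₀ / v) (c₀ + f₀ / v) := by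
  have hψ : Differentiable ℝ ψ := hC1.differentiable one_ne_zero
  have bound_at_extr : ∀ a, IsLocalExtr ψ a → ψ a ∈ Icc (c₀ - f₀ / v) (c₀ + f₀ / v) :=
    fun a ha => mem_Icc_of_mul_sub_add_mul_sin_eq_zero hv hf <| by
      simpa [deriv_pow_three_sub_eq_zero (hψ a) ha.deriv_eq_zero] using hode a
  obtain ⟨a, hmax⟩ := Function.Periodic.exists_isMaxOn_univ hper hL.ne' hψ.continuous
  obtain ⟨b, hmin⟩ := Function.Periodic.exists_isMinOn_univ hper hL.ne' hψ.continuous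
  have hmaxa := bound_at_extr a (hmax.isLocalMax Filter.univ_mem).isExtr
  have hminb := bound_at_extr b (hmin.isLocalMin Filter.univ_mem).isExtr
  intro η
  exact Icc_subset_Icc hminb.1 hmaxa.2 ⟨hmin (mem_univ η), hmax (mem_univ η)⟩

theorem stmt2 (D v f₀ L k c₀ : ℝ) (hD : 0 < D) (hv : 0 < v) (hf : 0 ≤ f₀) (hL : 0 < L)
    (hk : k = 2 * Real.pi / L) (ψ : ℝ → ℝ) (hC1 : ContDiff ℝ 1 ψ)
    (hper : ∀ η, ψ (η + L) = ψ η)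
    (hc₀ : c₀ = (1 / L) * ∫ η in (0:ℝ)..L, ψ η)
    (hode : ∀ η, D * deriv (fun x => ψ x ^ 3 - ψ x) η + v * (ψ η - c₀)
      + f₀ * Real.sin (k * η) = 0) :
    ∀ η, ψ η ∈ Set.Icc (c₀ - f₀ / v) (c₀ + f₀ / v) :=
  stmt2_general D v f₀ L k c₀ hv hf hL ψ hC1 hper hode
end

section
/- Let S : ℝ → ℝ be a smooth L-periodic function with S ≥ S_min > 0, and let u : ℝ → ℂ be a smooth L-periodic function with mean zero satisfying the eigenvalue equation λ u - v u' = D (S u)'' for some λ ∈ ℂ, v ∈ ℝ, D > 0, with u not identically zero. If S_min (2π/L)² ≥ (1/2) max |S''|, then Re(λ) ≤ 0. -/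
open scoped ContDiff Real
open MeasureTheory intervalIntegral Set Complex Function AddCircle


lemma parseval_aux {L : ℝ} (hL : 0 < L) [Fact (0 < L)] (f : C(AddCircle L, ℂ)) :
    ∑' n : ℤ, ‖fourierCoeff (f : AddCircle L → ℂ) n‖^2
      = (1/L) * ∫ x in (0:ℝ)..(0+L), ‖f (x : AddCircle L)‖^2 := by
  have h1 := tsum_sq_fourierCoeff (ContinuousMap.toLp (E := ℂ) 2 haarAddCircle ℂ f)
  simp_rw [fourierCoeff_toLp] at h1
  rw [h1]
  have h2 : ∫ t : AddCircle L, ‖(ContinuousMap.toLp (E := ℂ) 2 haarAddCircle ℂ f) t‖^2 ∂haarAddCircle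
      = ∫ t : AddCircle L, ‖f t‖^2 ∂haarAddCircle := by
    apply MeasureTheory.integral_congr_ae
    filter_upwards [ContinuousMap.coeFn_toLp (p := 2) (μ := haarAddCircle) (𝕜 := ℂ) f] with t ht
    rw [ht]
  rw [h2]
  have h3 : (∫ x in (0:ℝ)..(0+L), ‖f (x : AddCircle L)‖^2)
      = ∫ t : AddCircle L, ‖f t‖^2 := AddCircle.intervalIntegral_preimage L 0 (fun t => ‖f t‖^2)
  rw [h3, AddCircle.volume_eq_smul_haarAddCircle, MeasureTheory.integral_smul_measure]
  simp [ENNReal.toReal_ofReal hL.le]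
  field_simp

lemma summable_aux {L : ℝ} [Fact (0 < L)] (g : C(AddCircle L, ℂ)) :
    Summable (fun n : ℤ => ‖fourierCoeff (g : AddCircle L → ℂ) n‖^2) := by
  have hm := (fourierBasis.repr (ContinuousMap.toLp (E := ℂ) 2 haarAddCircle ℂ g)).property
  have := (memℓp_gen_iff (p := 2) (by norm_num)).mp hm
  simp_rw [fourierBasis_repr, fourierCoeff_toLp] at this
  convert this using 2 with n
  rw [ENNReal.toReal_ofNat]
  rw [← Real.rpow_natCast ‖fourierCoeff (⇑g) n‖ 2]
  norm_num

lemma wirtinger {L : ℝ} (hL : 0 < L) {u : ℝ → ℂ} (hu : ContDiff ℝ (⊤ : ℕ∞) u)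
    (hp : Function.Periodic u L) (hmean : ∫ x in (0:ℝ)..L, u x = 0) :
    (2*Real.pi/L)^2 * ∫ x in (0:ℝ)..L, ‖u x‖^2 ≤ ∫ x in (0:ℝ)..L, ‖deriv u x‖^2 := by
  haveI : Fact (0 < L) := ⟨hL⟩
  have hu' : ContDiff ℝ ∞ (deriv u) := (contDiff_infty_iff_deriv.mp (hu.of_le (by simp))).2
  have hp' : Function.Periodic (deriv u) L := by
    intro x
    have : deriv (fun y => u (y + L)) x = deriv u (x + L) := deriv_comp_add_const u L x
    rw [← this]; congr 1; ext y; exact hp y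
  have cf : Continuous hp.lift := by
    rw [(QuotientAddGroup.isQuotientMap_mk (AddSubgroup.zmultiples L)).continuous_iff]
    exact hu.continuous
  have cg : Continuous hp'.lift := by
    rw [(QuotientAddGroup.isQuotientMap_mk (AddSubgroup.zmultiples L)).continuous_iff]
    exact hu'.continuous
  set f : C(AddCircle L, ℂ) := ⟨hp.lift, cf⟩ with hfdef
  set g : C(AddCircle L, ℂ) := ⟨hp'.lift, cg⟩ with hgdef
  -- coefficients agree with fourierCoeffOn
  have hfc : ∀ n : ℤ, fourierCoeff (f : AddCircle L → ℂ) n = fourierCoeffOn hL u n := by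
    intro n
    rw [fourierCoeff_eq_intervalIntegral _ n 0, fourierCoeffOn_eq_integral]
    simp only [zero_add, sub_zero]
    congr 1
    apply intervalIntegral.integral_congr
    intro x _
    simp [hfdef, Periodic.lift_coe]
  have hgc : ∀ n : ℤ, fourierCoeff (g : AddCircle L → ℂ) n = fourierCoeffOn hL (deriv u) n := by
    intro n
    rw [fourierCoeff_eq_intervalIntegral _ n 0, fourierCoeffOn_eq_integral]
    simp only [zero_add, sub_zero]
    congr 1
    apply intervalIntegral.integral_congr
    intro x _
    simp [hgdef, Periodic.lift_coe]
  -- zero mean coefficient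
  have hc0 : fourierCoeffOn hL u 0 = 0 := by
    rw [fourierCoeffOn_eq_integral]
    simp only [neg_zero, sub_zero]
    rw [intervalIntegral.integral_congr (g := u) (by intro x _; simp)]
    simp [hmean]
  -- derivative coefficient relation
  have hrel : ∀ n : ℤ, n ≠ 0 →
      (L:ℂ) * fourierCoeffOn hL (deriv u) n = (2*π*I*n) * fourierCoeffOn hL u n := by
    intro n hn
    have hd := fourierCoeffOn_of_hasDerivAt hL hn
      (f := u) (f' := deriv u)
      (fun x _ => (hu.differentiable (by simp) x).hasDerivAt)
      ((hu'.continuous).intervalIntegrable 0 L)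
    have huL : u L = u 0 := by have := hp 0; rwa [zero_add] at this
    rw [huL] at hd
    simp only [sub_self, mul_zero, zero_sub, Complex.ofReal_zero, sub_zero] at hd
    rw [hd]
    have h2 : (2*(π:ℂ)*I*(n:ℂ)) ≠ 0 := by
      simp [Real.pi_ne_zero, I_ne_zero, hn]
    field_simp
    try ring
  -- norm relation
  have hnorm : ∀ n : ℤ, (2*π/L)^2 * ‖fourierCoeffOn hL u n‖^2 ≤ ‖fourierCoeffOn hL (deriv u) n‖^2 := by
    intro n
    rcases eq_or_ne n 0 with rfl | hn
    · rw [hc0]; simp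
    · have hthis := congrArg norm (hrel n hn)
      rw [norm_mul, norm_mul] at hthis
      have h2 : ‖(2*(π:ℂ)*I*(n:ℂ))‖ = 2*π*|(n:ℝ)| := by
        simp only [norm_mul, Complex.norm_I, Complex.norm_intCast, Complex.norm_ofNat,
          Complex.norm_real, Real.norm_eq_abs, abs_of_pos Real.pi_pos, mul_one, Int.cast_abs]
      rw [h2] at hthis
      rw [Complex.norm_real, Real.norm_eq_abs, abs_of_pos hL] at hthis
      have h1n : (1:ℝ) ≤ |(n:ℝ)| := by
        rw [← Int.cast_abs]
        exact_mod_cast Int.one_le_abs hn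
      have hcn : ‖fourierCoeffOn hL (deriv u) n‖ = (2*π*|(n:ℝ)|/L) * ‖fourierCoeffOn hL u n‖ := by
        field_simp at hthis ⊢
        linarith [hthis]
      rw [hcn]
      have hexp : ((2*π*|(n:ℝ)|/L) * ‖fourierCoeffOn hL u n‖)^2
          = (2*π/L)^2 * |(n:ℝ)|^2 * ‖fourierCoeffOn hL u n‖^2 := by ring
      rw [hexp]
      have h1n2 : (1:ℝ) ≤ |(n:ℝ)|^2 := by nlinarith
      nlinarith [sq_nonneg ‖fourierCoeffOn hL u n‖, sq_nonneg (2*π/L),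
        mul_nonneg (sq_nonneg (2*π/L)) (sq_nonneg ‖fourierCoeffOn hL u n‖)]
  -- assemble via Parseval
  have hPf := parseval_aux hL f
  have hPg := parseval_aux hL g
  have hSg := summable_aux g
  simp_rw [hfc] at hPf
  simp_rw [hgc] at hPg
  simp_rw [hgc] at hSg
  have hint1 : ∀ x:ℝ, ‖f (x : AddCircle L)‖^2 = ‖u x‖^2 := by
    intro x; simp [hfdef, Periodic.lift_coe]
  have hint2 : ∀ x:ℝ, ‖g (x : AddCircle L)‖^2 = ‖deriv u x‖^2 := by
    intro x; simp [hgdef, Periodic.lift_coe]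
  simp_rw [hint1, zero_add] at hPf
  simp_rw [hint2, zero_add] at hPg
  have hSf : Summable (fun n : ℤ => (2*π/L)^2 * ‖fourierCoeffOn hL u n‖^2) :=
    Summable.of_nonneg_of_le (fun n => by positivity) hnorm hSg
  have hts : ∑' n : ℤ, (2*π/L)^2 * ‖fourierCoeffOn hL u n‖^2
      ≤ ∑' n : ℤ, ‖fourierCoeffOn hL (deriv u) n‖^2 := Summable.tsum_le_tsum hnorm hSf hSg
  rw [tsum_mul_left, hPf, hPg] at hts
  have hLpos := hL
  calc (2*π/L)^2 * ∫ x in (0:ℝ)..L, ‖u x‖^2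
      = L * ((2*π/L)^2 * (1/L * ∫ x in (0:ℝ)..L, ‖u x‖^2)) := by field_simp
    _ ≤ L * (1/L * ∫ x in (0:ℝ)..L, ‖deriv u x‖^2) := by
        apply mul_le_mul_of_nonneg_left hts hL.le
    _ = ∫ x in (0:ℝ)..L, ‖deriv u x‖^2 := by field_simp


-- generic aux: conj commutes with interval integral
lemma iconj (f : ℝ → ℂ) (a b : ℝ) :
    ∫ x in a..b, (starRingEnd ℂ) (f x) = (starRingEnd ℂ) (∫ x in a..b, f x) := by
  rcases le_or_gt a b with h | h
  · rw [integral_of_le h, integral_of_le h, integral_conj]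
  · rw [integral_of_ge h.le, integral_of_ge h.le, integral_conj, map_neg]

-- deriv of periodic is periodic
lemma pderiv {E : Type*} [NormedAddCommGroup E] [NormedSpace ℝ E] {f : ℝ → E} {L : ℝ}
    (hp : Function.Periodic f L) : Function.Periodic (deriv f) L := by
  intro x
  have h := deriv_comp_add_const f L x
  rw [← h]; congr 1; ext y; exact hp y

-- FTC: integral of an explicit derivative of a periodic function over a period is 0
lemma ftc_per {L : ℝ} {g g' : ℝ → ℂ} (hg : ∀ x, HasDerivAt g (g' x) x)
    (hc : Continuous g') (hp : Function.Periodic g L) :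
    ∫ x in (0:ℝ)..L, g' x = 0 := by
  rw [integral_eq_sub_of_hasDerivAt (fun x _ => hg x) (hc.intervalIntegrable 0 L)]
  have := hp 0; rw [zero_add] at this; rw [this, sub_self]

theorem stmt11 (L D v Smin M : ℝ) (hL : 0 < L) (hD : 0 < D)
    (S : ℝ → ℝ) (hS : ContDiff ℝ (⊤ : ℕ∞) S) (hSper : ∀ η, S (η + L) = S η)
    (hSmin : 0 < Smin) (hSge : ∀ η, Smin ≤ S η)
    (hM : ∀ η, |iteratedDeriv 2 S η| ≤ M)
    (u : ℝ → ℂ) (hu : ContDiff ℝ (⊤ : ℕ∞) u) (huper : ∀ η, u (η + L) = u η)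
    (humean : ∫ η in (0:ℝ)..L, u η = 0) (hune : ∃ η, u η ≠ 0)
    (lam : ℂ)
    (heig : ∀ η, lam * u η - (v : ℂ) * deriv u η =
      (D : ℂ) * iteratedDeriv 2 (fun x => (S x : ℂ) * u x) η)
    (hcond : Smin * (2 * Real.pi / L) ^ 2 ≥ (1 / 2) * M) :
    lam.re ≤ 0 := by
  -- smoothness bookkeeping
  have hone : (∞ : WithTop ℕ∞) ≠ 0 := by simp
  have hu1 : ContDiff ℝ ∞ u := hu.of_le (by simp)
  have hS1 : ContDiff ℝ ∞ S := hS.of_le (by simp)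
  have hu' : ContDiff ℝ ∞ (deriv u) := (contDiff_infty_iff_deriv.mp hu1).2
  have hS' : ContDiff ℝ ∞ (deriv S) := (contDiff_infty_iff_deriv.mp hS1).2
  have hS'' : ContDiff ℝ ∞ (deriv (deriv S)) := (contDiff_infty_iff_deriv.mp hS').2
  have cu : Continuous u := hu1.continuous
  have cu' : Continuous (deriv u) := hu'.continuous
  have cS : Continuous S := hS1.continuous
  have cS' : Continuous (deriv S) := hS'.continuous
  have cS'' : Continuous (deriv (deriv S)) := hS''.continuous
  have hpu : Function.Periodic u L := huper
  have hpS : Function.Periodic S L := hSper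
  have hpu' : Function.Periodic (deriv u) L := pderiv hpu
  have hpS' : Function.Periodic (deriv S) L := pderiv hpS
  have ccu : Continuous fun x => (starRingEnd ℂ) (u x) := Complex.continuous_conj.comp cu
  have ccu' : Continuous fun x => (starRingEnd ℂ) (deriv u x) := Complex.continuous_conj.comp cu'
  have cRS : Continuous fun x => Complex.ofReal (S x) := Complex.continuous_ofReal.comp cS
  have cRS' : Continuous fun x => Complex.ofReal (deriv S x) := Complex.continuous_ofReal.comp cS'
  have cRS'' : Continuous fun x => Complex.ofReal (deriv (deriv S) x) := Complex.continuous_ofReal.comp cS''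
  -- pointwise derivative facts
  have hdu : ∀ x, HasDerivAt u (deriv u x) x := fun x => (hu1.differentiable hone x).hasDerivAt
  have hdcu : ∀ x, HasDerivAt (fun y => (starRingEnd ℂ) (u y)) ((starRingEnd ℂ) (deriv u x)) x := by
    intro x
    have := (Complex.conjCLE.toContinuousLinearMap.hasFDerivAt (x := u x)).comp_hasDerivAt x (hdu x)
    simpa [Function.comp_def] using this
  have hdS : ∀ x, HasDerivAt (fun y => Complex.ofReal (S y)) (Complex.ofReal (deriv S x)) x :=
    fun x => ((hS1.differentiable hone x).hasDerivAt).ofReal_comp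
  have hdS' : ∀ x, HasDerivAt (fun y => Complex.ofReal (deriv S y)) (Complex.ofReal (deriv (deriv S) x)) x :=
    fun x => ((hS'.differentiable hone x).hasDerivAt).ofReal_comp
  -- F and its derivatives
  set F : ℝ → ℂ := fun x => (S x : ℂ) * u x with hFdef
  set Fp : ℝ → ℂ := fun x => Complex.ofReal (deriv S x) * u x + (S x : ℂ) * deriv u x with hFpdef
  have hdF : ∀ x, HasDerivAt F (Fp x) x := fun x => (hdS x).mul (hdu x)
  have hderivF : deriv F = Fp := funext fun x => (hdF x).deriv
  have hFp : ContDiff ℝ ∞ Fp :=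
    ((Complex.ofRealCLM.contDiff.comp hS').mul hu1).add ((Complex.ofRealCLM.contDiff.comp hS1).mul hu')
  have hdFp : ∀ x, HasDerivAt Fp (deriv Fp x) x := fun x => (hFp.differentiable hone x).hasDerivAt
  have cFp : Continuous Fp := hFp.continuous
  have cdFp : Continuous (deriv Fp) := ((contDiff_infty_iff_deriv.mp hFp).2).continuous
  have hiter : ∀ x, iteratedDeriv 2 F x = deriv Fp x := by
    intro x
    rw [show (2:ℕ) = 1 + 1 from rfl, iteratedDeriv_succ, iteratedDeriv_one, hderivF]
  -- key real integrals
  set A : ℝ := ∫ x in (0:ℝ)..L, ‖u x‖^2 with hAdef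
  set I2 : ℝ := ∫ x in (0:ℝ)..L, ‖deriv u x‖^2 with hI2def
  set I3 : ℝ := ∫ x in (0:ℝ)..L, S x * ‖deriv u x‖^2 with hI3def
  set I4 : ℝ := ∫ x in (0:ℝ)..L, deriv (deriv S) x * ‖u x‖^2 with hI4def
  -- complex integrals
  set J : ℂ := ∫ x in (0:ℝ)..L, deriv u x * (starRingEnd ℂ) (u x) with hJdef
  set X : ℂ := ∫ x in (0:ℝ)..L, Complex.ofReal (deriv S x) * (u x * (starRingEnd ℂ) (deriv u x)) with hXdef
  -- ∫ u * conj u = A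
  have hA1 : (∫ x in (0:ℝ)..L, u x * (starRingEnd ℂ) (u x)) = (A : ℂ) := by
    rw [hAdef, ← intervalIntegral.integral_ofReal]
    apply intervalIntegral.integral_congr
    intro x _
    show u x * (starRingEnd ℂ) (u x) = ((‖u x‖^2 : ℝ) : ℂ)
    rw [Complex.mul_conj']
    norm_cast
  -- J has zero real part
  have hJre : J.re = 0 := by
    have hg : ∀ x, HasDerivAt (fun y => u y * (starRingEnd ℂ) (u y))
        (deriv u x * (starRingEnd ℂ) (u x) + u x * (starRingEnd ℂ) (deriv u x)) x :=
      fun x => (hdu x).mul (hdcu x)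
    have h0 : ∫ x in (0:ℝ)..L, (deriv u x * (starRingEnd ℂ) (u x) + u x * (starRingEnd ℂ) (deriv u x)) = 0 := by
      apply ftc_per hg
      · exact (cu'.mul ccu).add (cu.mul ccu')
      · intro x; simp only; rw [hpu x]
    rw [intervalIntegral.integral_add (f := fun x => deriv u x * (starRingEnd ℂ) (u x))
      (g := fun x => u x * (starRingEnd ℂ) (deriv u x)) ((cu'.mul ccu).intervalIntegrable 0 L)
      ((cu.mul ccu').intervalIntegrable 0 L)] at h0
    have hconjJ : (∫ x in (0:ℝ)..L, u x * (starRingEnd ℂ) (deriv u x)) = (starRingEnd ℂ) J := by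
      rw [hJdef, ← iconj]
      apply intervalIntegral.integral_congr
      intro x _
      simp [mul_comm]
    rw [hconjJ] at h0
    have := congrArg Complex.re h0
    simp [Complex.add_re, Complex.conj_re] at this
    linarith
  -- X real part
  have hXre : X.re = -(I4 / 2) := by
    have hg : ∀ x, HasDerivAt (fun y => Complex.ofReal (deriv S y) * (u y * (starRingEnd ℂ) (u y)))
        (Complex.ofReal (deriv (deriv S) x) * (u x * (starRingEnd ℂ) (u x)) +
          Complex.ofReal (deriv S x) * (deriv u x * (starRingEnd ℂ) (u x) + u x * (starRingEnd ℂ) (deriv u x))) x :=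
      fun x => (hdS' x).mul ((hdu x).mul (hdcu x))
    have h0 : ∫ x in (0:ℝ)..L, (Complex.ofReal (deriv (deriv S) x) * (u x * (starRingEnd ℂ) (u x)) +
        Complex.ofReal (deriv S x) * (deriv u x * (starRingEnd ℂ) (u x) + u x * (starRingEnd ℂ) (deriv u x))) = 0 := by
      apply ftc_per hg
      · exact (cRS''.mul (cu.mul ccu)).add (cRS'.mul ((cu'.mul ccu).add (cu.mul ccu')))
      · intro x; simp only; rw [hpu x, hpS' x]
    have c1 : Continuous fun x => Complex.ofReal (deriv (deriv S) x) * (u x * (starRingEnd ℂ) (u x)) := cRS''.mul (cu.mul ccu)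
    have c2 : Continuous fun x => Complex.ofReal (deriv S x) * (deriv u x * (starRingEnd ℂ) (u x) + u x * (starRingEnd ℂ) (deriv u x)) := cRS'.mul ((cu'.mul ccu).add (cu.mul ccu'))
    rw [intervalIntegral.integral_add (c1.intervalIntegrable 0 L) (c2.intervalIntegrable 0 L)] at h0
    -- first piece is (I4 : ℂ)
    have h1 : (∫ x in (0:ℝ)..L, Complex.ofReal (deriv (deriv S) x) * (u x * (starRingEnd ℂ) (u x))) = (I4 : ℂ) := by
      rw [hI4def, ← intervalIntegral.integral_ofReal]
      apply intervalIntegral.integral_congr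
      intro x _
      show Complex.ofReal (deriv (deriv S) x) * (u x * (starRingEnd ℂ) (u x)) = ((deriv (deriv S) x * ‖u x‖^2 : ℝ) : ℂ)
      rw [Complex.mul_conj']
      push_cast
      ring
    -- second piece is conj X + X
    have c3 : Continuous fun x => Complex.ofReal (deriv S x) * (deriv u x * (starRingEnd ℂ) (u x)) := cRS'.mul (cu'.mul ccu)
    have c4 : Continuous fun x => Complex.ofReal (deriv S x) * (u x * (starRingEnd ℂ) (deriv u x)) := cRS'.mul (cu.mul ccu')
    have h2 : (∫ x in (0:ℝ)..L, Complex.ofReal (deriv S x) * (deriv u x * (starRingEnd ℂ) (u x) + u x * (starRingEnd ℂ) (deriv u x)))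
        = (starRingEnd ℂ) X + X := by
      rw [show (fun x => Complex.ofReal (deriv S x) * (deriv u x * (starRingEnd ℂ) (u x) + u x * (starRingEnd ℂ) (deriv u x)))
          = fun x => Complex.ofReal (deriv S x) * (deriv u x * (starRingEnd ℂ) (u x)) + Complex.ofReal (deriv S x) * (u x * (starRingEnd ℂ) (deriv u x)) from funext fun x => by ring]
      rw [intervalIntegral.integral_add (c3.intervalIntegrable 0 L) (c4.intervalIntegrable 0 L)]
      congr 1
      rw [hXdef, ← iconj]
      apply intervalIntegral.integral_congr
      intro x _
      simp only [map_mul, Complex.conj_conj, Complex.conj_ofReal]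
      ring
    rw [h1, h2] at h0
    have := congrArg Complex.re h0
    simp only [Complex.add_re, Complex.ofReal_re, Complex.conj_re, Complex.zero_re] at this
    linarith
  -- continuity of squared norms
  have cnu2 : Continuous fun x => ‖u x‖^2 := (cu.norm).pow 2
  have cnu'2 : Continuous fun x => ‖deriv u x‖^2 := (cu'.norm).pow 2
  -- Fp is periodic
  have hFpper : ∀ x, Fp (x + L) = Fp x := by
    intro x
    show Complex.ofReal (deriv S (x+L)) * u (x+L) + Complex.ofReal (S (x+L)) * deriv u (x+L)
      = Complex.ofReal (deriv S x) * u x + Complex.ofReal (S x) * deriv u x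
    rw [hpS' x, hpu x, hpu' x, hpS x]
  -- integrated eigen-equation
  have heq : ∫ x in (0:ℝ)..L, (lam * u x - (v:ℂ) * deriv u x) * (starRingEnd ℂ) (u x)
      = ∫ x in (0:ℝ)..L, (D:ℂ) * (deriv Fp x * (starRingEnd ℂ) (u x)) := by
    apply intervalIntegral.integral_congr
    intro x _
    show (lam * u x - (v:ℂ) * deriv u x) * (starRingEnd ℂ) (u x)
      = (D:ℂ) * (deriv Fp x * (starRingEnd ℂ) (u x))
    rw [← hiter x, heig x, mul_assoc]
  -- LHS
  have hLHS : ∫ x in (0:ℝ)..L, (lam * u x - (v:ℂ) * deriv u x) * (starRingEnd ℂ) (u x)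
      = lam * (A:ℂ) - (v:ℂ) * J := by
    rw [show (fun x => (lam * u x - (v:ℂ) * deriv u x) * (starRingEnd ℂ) (u x))
        = fun x => lam * (u x * (starRingEnd ℂ) (u x)) - (v:ℂ) * (deriv u x * (starRingEnd ℂ) (u x))
        from funext fun x => by ring]
    rw [intervalIntegral.integral_sub (f := fun x => lam * (u x * (starRingEnd ℂ) (u x)))
      (g := fun x => (v:ℂ) * (deriv u x * (starRingEnd ℂ) (u x))) ((continuous_const.mul (cu.mul ccu)).intervalIntegrable 0 L)
      ((continuous_const.mul (cu'.mul ccu)).intervalIntegrable 0 L),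
      intervalIntegral.integral_const_mul, intervalIntegral.integral_const_mul, hA1, ← hJdef]
  -- integration by parts
  have hIBP : ∫ x in (0:ℝ)..L, (starRingEnd ℂ) (u x) * deriv Fp x
      = - ∫ x in (0:ℝ)..L, (starRingEnd ℂ) (deriv u x) * Fp x := by
    rw [integral_mul_deriv_eq_deriv_mul (fun x _ => hdcu x) (fun x _ => hdFp x)
      (ccu'.intervalIntegrable 0 L) (cdFp.intervalIntegrable 0 L)]
    have h1 : u L = u 0 := by have := hpu 0; rwa [zero_add] at this
    have h2 : Fp L = Fp 0 := by have := hFpper 0; rwa [zero_add] at this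
    rw [h1, h2]; ring
  -- expansion of the parts integral
  have hExp : ∫ x in (0:ℝ)..L, (starRingEnd ℂ) (deriv u x) * Fp x = X + (I3:ℂ) := by
    rw [show (fun x => (starRingEnd ℂ) (deriv u x) * Fp x)
        = fun x => Complex.ofReal (deriv S x) * (u x * (starRingEnd ℂ) (deriv u x))
            + Complex.ofReal (S x) * (deriv u x * (starRingEnd ℂ) (deriv u x))
        from funext fun x => by
          show (starRingEnd ℂ) (deriv u x) *
              (Complex.ofReal (deriv S x) * u x + Complex.ofReal (S x) * deriv u x) = _
          ring]
    rw [intervalIntegral.integral_add (f := fun x => Complex.ofReal (deriv S x) * (u x * (starRingEnd ℂ) (deriv u x)))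
      (g := fun x => Complex.ofReal (S x) * (deriv u x * (starRingEnd ℂ) (deriv u x))) ((cRS'.mul (cu.mul ccu')).intervalIntegrable 0 L)
      ((cRS.mul (cu'.mul ccu')).intervalIntegrable 0 L), ← hXdef]
    congr 1
    rw [hI3def, ← intervalIntegral.integral_ofReal]
    apply intervalIntegral.integral_congr
    intro x _
    show Complex.ofReal (S x) * (deriv u x * (starRingEnd ℂ) (deriv u x))
      = ((S x * ‖deriv u x‖^2 : ℝ) : ℂ)
    rw [Complex.mul_conj']
    push_cast
    ring
  -- RHS
  have hRHS : ∫ x in (0:ℝ)..L, (D:ℂ) * (deriv Fp x * (starRingEnd ℂ) (u x))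
      = (D:ℂ) * (-(X + (I3:ℂ))) := by
    rw [intervalIntegral.integral_const_mul]
    congr 1
    rw [show (fun x => deriv Fp x * (starRingEnd ℂ) (u x))
        = fun x => (starRingEnd ℂ) (u x) * deriv Fp x from funext fun x => by ring]
    rw [hIBP, hExp]
  -- key real identity
  have hkey : lam * (A:ℂ) - (v:ℂ) * J = (D:ℂ) * (-(X + (I3:ℂ))) := by
    rw [← hLHS, heq, hRHS]
  have hre := congrArg Complex.re hkey
  simp only [Complex.sub_re, Complex.mul_re, Complex.ofReal_re, Complex.ofReal_im,
    Complex.neg_re, Complex.add_re, zero_mul, mul_zero, sub_zero] at hre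
  rw [hJre, hXre] at hre
  have hmain : lam.re * A = D * (I4 / 2 - I3) := by
    linarith [hre]
  -- inequality I4 ≤ M * A
  have hI4le : I4 ≤ M * A := by
    rw [hI4def, hAdef, ← intervalIntegral.integral_const_mul]
    apply intervalIntegral.integral_mono_on hL.le ((cS''.mul cnu2).intervalIntegrable 0 L)
      ((continuous_const.mul cnu2).intervalIntegrable 0 L)
    intro x _
    have h1 : deriv (deriv S) x ≤ M := by
      have h := hM x
      rw [show (2:ℕ) = 1 + 1 from rfl, iteratedDeriv_succ, iteratedDeriv_one] at h
      exact le_trans (le_abs_self _) h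
    exact mul_le_mul_of_nonneg_right h1 (sq_nonneg _)
  -- inequality Smin * I2 ≤ I3
  have hI3ge : Smin * I2 ≤ I3 := by
    rw [hI3def, hI2def, ← intervalIntegral.integral_const_mul]
    apply intervalIntegral.integral_mono_on hL.le ((continuous_const.mul cnu'2).intervalIntegrable 0 L)
      ((cS.mul cnu'2).intervalIntegrable 0 L)
    intro x _
    exact mul_le_mul_of_nonneg_right (hSge x) (sq_nonneg _)
  -- A is positive
  have hApos : 0 < A := by
    obtain ⟨η₀, hη₀⟩ := hune
    obtain ⟨η₁, hmem, hval⟩ := hpu.exists_mem_Ioc hL η₀ 0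
    rw [zero_add] at hmem
    have hne : u η₁ ≠ 0 := by rw [← hval]; exact hη₀
    have hnn : (0:ℝ → ℝ) ≤ᵐ[volume] fun x => ‖u x‖^2 :=
      Filter.Eventually.of_forall fun x => by positivity
    rw [hAdef]
    rw [intervalIntegral.integral_pos_iff_support_of_nonneg_ae hnn (cnu2.intervalIntegrable 0 L)]
    refine ⟨hL, ?_⟩
    have hopen : IsOpen {x : ℝ | u x ≠ 0} := isOpen_compl_singleton.preimage cu
    obtain ⟨ε, hε, hball⟩ := Metric.isOpen_iff.mp hopen η₁ hne
    have ha : max (η₁ - ε) 0 < η₁ := by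
      rcases hmem with ⟨h1, h2⟩
      apply max_lt <;> linarith
    have hsub : Ioo (max (η₁ - ε) 0) η₁ ⊆ Function.support (fun x => ‖u x‖^2) ∩ Ioc 0 L := by
      intro x hx
      rcases hx with ⟨hx1, hx2⟩
      have hx1' : η₁ - ε < x := lt_of_le_of_lt (le_max_left _ _) hx1
      have hx0 : 0 < x := lt_of_le_of_lt (le_max_right _ _) hx1
      constructor
      · have : u x ≠ 0 := by
          apply hball
          rw [Metric.mem_ball, Real.dist_eq, abs_of_neg (by linarith : x - η₁ < 0)]
          linarith
        simp [Function.mem_support, this]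
      · exact ⟨hx0, le_trans hx2.le hmem.2⟩
    calc (0:ENNReal) < volume (Ioo (max (η₁ - ε) 0) η₁) := (Measure.measure_Ioo_pos _).mpr ha
      _ ≤ volume (Function.support (fun x => ‖u x‖^2) ∩ Ioc 0 L) := measure_mono hsub
  -- Wirtinger inequality
  have hwir : (2*π/L)^2 * A ≤ I2 := wirtinger hL hu hpu humean
  have hfin : lam.re * A ≤ 0 := by
    rw [hmain]
    have h1 : Smin * ((2*π/L)^2 * A) ≤ Smin * I2 := mul_le_mul_of_nonneg_left hwir hSmin.le
    have h2 : I4 / 2 - I3 ≤ 0 := by nlinarith [hApos.le]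
    nlinarith [hD.le]
  by_contra h
  push_neg at h
  nlinarith [mul_pos h hApos]
end
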